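/- Let η_w > 0, T ≥ 1, and let Λ_i(t) be a family of nonempty finite index sets satisfying Λ_i(t) ⊆ Λ_i(t-1) for all t (Assumption 1), with degree d_i(t) = |Λ_i(t)|. Suppose each index j carries cumulative losses \bar{L}_{t,j} = Σ_{s=1}^t \bar{l}_{s,j} with \bar{l}_{s,j} ∈ [0,1], the social prediction is \hat{f}_{t,i} = Σ_{j ∈ Λ_i(t-1)} w_{ij}(t-1) \bar{f}_{t,j} with w_{ij}(t) = exp(-η_w \bar{L}_{t,j}) / Σ_{j' ∈ Λ_i(t)} exp(-η_w \bar{L}_{t,j'}), and the loss l is convex in its first argument with values in [0,1]. Then \hat{L}_{T,i} - min_{j ∈ Λ_i(T)} \bar{L}_{T,j} ≤ η_w T/8 + (log d_i(0))/η_w. -/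

import Mathlib

/-!
Consider the potential `Φ t = log ∑_{j ∈ Λ t} exp (-η L̄_{t,j})`. Going from `t` to
`t + 1`, dropping the indices that leave the shrinking neighbourhood only decreases the sum, and
what remains is `Φ t` plus the log-moment generating function of the round's losses under the
exponential weights. Hoeffding's lemma bounds the latter by `-η` times the mean loss plus `η² / 8`,
and by Jensen the mean loss dominates the loss of the social prediction. Telescoping gives
`Φ T ≤ log |Λ 0| - η L̂_T + T η² / 8`, while `Φ T ≥ -η min_j L̄_{T,j}`.
-/

open Real MeasureTheory ProbabilityTheory Finset

/-- Hoeffding's lemma for a finitely supported distribution `p` of values in `[0, 1]`. -/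
theorem sum_mul_exp_le_exp_of_mem_Icc {ι : Type*} (s : Finset ι) (p : ι → ℝ)
    (hp : ∀ j ∈ s, 0 ≤ p j) (hp1 : ∑ j ∈ s, p j = 1) (x : ι → ℝ)
    (hx : ∀ j ∈ s, x j ∈ Set.Icc (0 : ℝ) 1) (θ : ℝ) :
    ∑ j ∈ s, p j * exp (θ * x j) ≤ exp (θ * ∑ j ∈ s, p j * x j + θ ^ 2 / 8) := by
  let _ : MeasurableSpace ι := ⊤
  set μ : Measure ι := ∑ j ∈ s, ENNReal.ofReal (p j) • Measure.dirac j with hμ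
  have integral_eq : ∀ f : ι → ℝ, ∫ i, f i ∂μ = ∑ j ∈ s, p j * f j := by
    intro f
    rw [hμ, integral_finsetSum_measure]
    · refine sum_congr rfl fun j hj => ?_
      rw [integral_smul_measure, integral_dirac, ENNReal.toReal_ofReal (hp j hj), smul_eq_mul]
    · exact fun j _ => (integrable_dirac enorm_lt_top).smul_measure ENNReal.ofReal_ne_top
  have : IsProbabilityMeasure μ := ⟨by
    simp only [hμ, Measure.coe_finsetSum, Finset.sum_apply, Measure.smul_apply, measure_univ,
      smul_eq_mul, mul_one]
    rw [← ENNReal.ofReal_sum_of_nonneg hp, hp1, ENNReal.ofReal_one]⟩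
  have hx_ae : ∀ᵐ i ∂μ, x i ∈ Set.Icc (0 : ℝ) 1 := by
    rw [ae_iff, hμ, Measure.coe_finsetSum, Finset.sum_apply]
    refine sum_eq_zero fun j hj => ?_
    rw [Measure.smul_apply, Measure.dirac_apply' _ MeasurableSpace.measurableSet_top]
    simpa using Or.inr (hx j hj)
  have hoeffding := (hasSubgaussianMGF_of_mem_Icc measurable_from_top.aemeasurable hx_ae).mgf_le θ
  have hvar : ((‖(1 : ℝ) - 0‖₊ / 2) ^ 2 : NNReal) * θ ^ 2 / 2 = θ ^ 2 / 8 := by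
    norm_num; ring
  rw [mgf, integral_eq, integral_eq, hvar] at hoeffding
  set m := ∑ j ∈ s, p j * x j
  calc ∑ j ∈ s, p j * exp (θ * x j) = exp (θ * m) * ∑ j ∈ s, p j * exp (θ * (x j - m)) := by
        rw [mul_sum]
        refine sum_congr rfl fun j _ => ?_
        rw [mul_left_comm, ← exp_add]
        ring_nf
    _ ≤ exp (θ * m) * exp (θ ^ 2 / 8) := by gcongr
    _ = exp (θ * m + θ ^ 2 / 8) := (exp_add _ _).symm

section ExpWeights

variable {ι : Type*} {s s' : Finset ι} {η : ℝ} {L ℓ : ι → ℝ}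

noncomputable def expWeight (s : Finset ι) (η : ℝ) (L : ι → ℝ) (j : ι) : ℝ :=
  exp (-η * L j) / ∑ k ∈ s, exp (-η * L k)

theorem sum_exp_pos (hs : s.Nonempty) : 0 < ∑ k ∈ s, exp (-η * L k) :=
  sum_pos (fun _ _ => exp_pos _) hs

theorem expWeight_nonneg (j : ι) : 0 ≤ expWeight s η L j := by
  unfold expWeight; positivity

theorem sum_expWeight (hs : s.Nonempty) : ∑ j ∈ s, expWeight s η L j = 1 := by
  simp only [expWeight, ← sum_div]
  exact div_self (sum_exp_pos hs).ne'

theorem exp_mul_expWeight (hs : s.Nonempty) (j : ι) :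
    (∑ k ∈ s, exp (-η * L k)) * expWeight s η L j = exp (-η * L j) :=
  mul_div_cancel₀ _ (sum_exp_pos hs).ne'

theorem neg_mul_le_log_sum_exp {j : ι} (hj : j ∈ s) :
    -η * L j ≤ log (∑ k ∈ s, exp (-η * L k)) := by
  rw [← log_exp (-η * L j)]
  exact log_le_log (exp_pos _)
    (single_le_sum (f := fun k => exp (-η * L k)) (fun _ _ => (exp_pos _).le) hj)

theorem log_sum_exp_add_le (hss' : s' ⊆ s) (hs' : s'.Nonempty)
    (hℓ : ∀ j ∈ s, ℓ j ∈ Set.Icc (0 : ℝ) 1) :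
    log (∑ j ∈ s', exp (-η * (L j + ℓ j))) ≤
      log (∑ j ∈ s, exp (-η * L j)) - η * ∑ j ∈ s, expWeight s η L j * ℓ j + η ^ 2 / 8 := by
  have hs : s.Nonempty := hs'.mono hss'
  set Z := ∑ j ∈ s, exp (-η * L j)
  have hZ : 0 < Z := sum_exp_pos hs
  have hbound : ∑ j ∈ s', exp (-η * (L j + ℓ j)) ≤
      Z * exp (-η * ∑ j ∈ s, expWeight s η L j * ℓ j + η ^ 2 / 8) :=
    calc ∑ j ∈ s', exp (-η * (L j + ℓ j))
        ≤ ∑ j ∈ s, exp (-η * (L j + ℓ j)) :=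
          sum_le_sum_of_subset_of_nonneg hss' fun _ _ _ => (exp_pos _).le
      _ = Z * ∑ j ∈ s, expWeight s η L j * exp (-η * ℓ j) := by
          rw [mul_sum]
          refine sum_congr rfl fun j _ => ?_
          rw [← mul_assoc, exp_mul_expWeight hs, ← exp_add, mul_add]
      _ ≤ Z * exp (-η * ∑ j ∈ s, expWeight s η L j * ℓ j + η ^ 2 / 8) := by
          gcongr
          simpa only [neg_sq] using sum_mul_exp_le_exp_of_mem_Icc s _
            (fun j _ => expWeight_nonneg j) (sum_expWeight hs) ℓ hℓ (-η)
  calc log (∑ j ∈ s', exp (-η * (L j + ℓ j)))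
      ≤ log (Z * exp (-η * ∑ j ∈ s, expWeight s η L j * ℓ j + η ^ 2 / 8)) :=
        log_le_log (sum_exp_pos hs') hbound
    _ = log Z - η * ∑ j ∈ s, expWeight s η L j * ℓ j + η ^ 2 / 8 := by
        rw [log_mul hZ.ne' (exp_pos _).ne', log_exp]; ring

theorem log_sum_exp_add_le_of_convexOn {E : Type*} [AddCommGroup E] [Module ℝ E] {A : Set E}
    {f : E → ℝ} (hf : ConvexOn ℝ A f) (hη : 0 ≤ η) (hss' : s' ⊆ s) (hs' : s'.Nonempty)
    {x : ι → E} (hxA : ∀ j ∈ s, x j ∈ A) (hfx : ∀ j ∈ s, f (x j) ∈ Set.Icc (0 : ℝ) 1) :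
    log (∑ j ∈ s', exp (-η * (L j + f (x j)))) ≤
      log (∑ j ∈ s, exp (-η * L j)) - η * f (∑ j ∈ s, expWeight s η L j • x j) + η ^ 2 / 8 := by
  have jensen : f (∑ j ∈ s, expWeight s η L j • x j) ≤ ∑ j ∈ s, expWeight s η L j * f (x j) :=
    hf.map_sum_le (fun j _ => expWeight_nonneg j) (sum_expWeight (hs'.mono hss')) hxA
  have := log_sum_exp_add_le (η := η) (L := L) hss' hs' hfx
  linarith [mul_le_mul_of_nonneg_left jensen hη]

end ExpWeights

theorem d2eal_social_regret_general
    {n : ℕ} {Y : Type*}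
    (A : Set (EuclideanSpace ℝ (Fin n)))
    (l : EuclideanSpace ℝ (Fin n) → Y → ℝ)
    (hl01 : ∀ x ∈ A, ∀ y : Y, l x y ∈ Set.Icc (0:ℝ) 1)
    (hconv : ∀ y : Y, ConvexOn ℝ A (fun x => l x y))
    (ηw : ℝ) (hη : 0 < ηw) (T : ℕ)
    -- neighbour index sets (Assumption 1: shrinking neighborhoods)
    (Λ : ℕ → Finset ℕ) (hΛne : ∀ t, (Λ t).Nonempty)
    (hΛshrink : ∀ t, Λ (t+1) ⊆ Λ t)
    -- individual predictions of the agents and the target sequence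
    (barf : ℕ → ℕ → EuclideanSpace ℝ (Fin n)) (y : ℕ → Y)
    (hbarfA : ∀ t j, barf t j ∈ A)
    -- cumulative individual losses
    (barL : ℕ → ℕ → ℝ)
    (hbarL : ∀ t j, barL t j = ∑ s ∈ Finset.range t, l (barf (s+1) j) (y (s+1)))
    -- normalized exponential weights
    (w : ℕ → ℕ → ℝ)
    (hw : ∀ t j, w t j =
      Real.exp (-ηw * barL t j) / ∑ j' ∈ Λ t, Real.exp (-ηw * barL t j'))
    -- social prediction
    (fhat : ℕ → EuclideanSpace ℝ (Fin n))
    (hfhat : ∀ t, fhat (t+1) = ∑ j ∈ Λ t, w t j • barf (t+1) j)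
    -- social prediction cumulative loss
    (hatL : ℕ → ℝ)
    (hhatL : ∀ t, hatL t = ∑ s ∈ Finset.range t, l (fhat (s+1)) (y (s+1))) :
    hatL T - (Λ T).inf' (hΛne T) (fun j => barL T j)
      ≤ ηw * T / 8 + Real.log ((Λ 0).card) / ηw := by
  set Φ : ℕ → ℝ := fun t => log (∑ j ∈ Λ t, exp (-ηw * barL t j))
  have step : ∀ t, Φ (t + 1) - Φ t ≤ -ηw * l (fhat (t + 1)) (y (t + 1)) + ηw ^ 2 / 8 := by
    intro t
    have hsucc : ∀ j, barL (t + 1) j = barL t j + l (barf (t + 1) j) (y (t + 1)) := fun j => by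
      rw [hbarL, hbarL, sum_range_succ]
    have hw' : w t = expWeight (Λ t) ηw (barL t) := funext (hw t)
    have := log_sum_exp_add_le_of_convexOn (L := barL t) (hconv (y (t + 1))) hη.le
      (hΛshrink t) (hΛne (t + 1)) (fun j _ => hbarfA (t + 1) j)
      (fun j _ => hl01 _ (hbarfA (t + 1) j) (y (t + 1)))
    simp only [Φ, hsucc, hfhat, hw']
    linarith
  have telescope : Φ T - Φ 0 ≤ -ηw * hatL T + T * ηw ^ 2 / 8 :=
    calc Φ T - Φ 0 = ∑ t ∈ range T, (Φ (t + 1) - Φ t) := (sum_range_sub Φ T).symm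
      _ ≤ ∑ t ∈ range T, (-ηw * l (fhat (t + 1)) (y (t + 1)) + ηw ^ 2 / 8) :=
        sum_le_sum fun t _ => step t
      _ = -ηw * hatL T + T * ηw ^ 2 / 8 := by
        rw [sum_add_distrib, ← mul_sum, ← hhatL, sum_const, card_range, nsmul_eq_mul]
        ring
  have initial : Φ 0 = log (Λ 0).card := by simp [Φ, hbarL]
  obtain ⟨j, hj, hmin⟩ := exists_mem_eq_inf' (hΛne T) (fun j => barL T j)
  have final : -ηw * barL T j ≤ Φ T := neg_mul_le_log_sum_exp hj
  rw [hmin, ← mul_le_mul_iff_right₀ hη, mul_add, mul_div_cancel₀ _ hη.ne']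
  linarith

/-- Lemma 2 of D2EAL: social prediction regret bound under
the shrinking-neighborhood assumption. -/
theorem d2eal_social_regret
    {n : ℕ} {Y : Type*}
    (A : Set (EuclideanSpace ℝ (Fin n))) (hA : Convex ℝ A)
    (l : EuclideanSpace ℝ (Fin n) → Y → ℝ)
    (hl01 : ∀ x ∈ A, ∀ y : Y, l x y ∈ Set.Icc (0:ℝ) 1)
    (hconv : ∀ y : Y, ConvexOn ℝ A (fun x => l x y))
    (ηw : ℝ) (hη : 0 < ηw) (T : ℕ) (hT : 1 ≤ T)
    -- neighbour index sets (Assumption 1: shrinking neighborhoods)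
    (Λ : ℕ → Finset ℕ) (hΛne : ∀ t, (Λ t).Nonempty)
    (hΛshrink : ∀ t, Λ (t+1) ⊆ Λ t)
    -- individual predictions of the agents and the target sequence
    (barf : ℕ → ℕ → EuclideanSpace ℝ (Fin n)) (y : ℕ → Y)
    (hbarfA : ∀ t j, barf t j ∈ A)
    -- cumulative individual losses
    (barL : ℕ → ℕ → ℝ)
    (hbarL : ∀ t j, barL t j = ∑ s ∈ Finset.range t, l (barf (s+1) j) (y (s+1)))
    -- normalized exponential weights
    (w : ℕ → ℕ → ℝ)
    (hw : ∀ t j, w t j =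
      Real.exp (-ηw * barL t j) / ∑ j' ∈ Λ t, Real.exp (-ηw * barL t j'))
    -- social prediction
    (fhat : ℕ → EuclideanSpace ℝ (Fin n))
    (hfhat : ∀ t, fhat (t+1) = ∑ j ∈ Λ t, w t j • barf (t+1) j)
    -- social prediction cumulative loss
    (hatL : ℕ → ℝ)
    (hhatL : ∀ t, hatL t = ∑ s ∈ Finset.range t, l (fhat (s+1)) (y (s+1))) :
    hatL T - (Λ T).inf' (hΛne T) (fun j => barL T j)
      ≤ ηw * T / 8 + Real.log ((Λ 0).card) / ηw :=
  d2eal_social_regret_general A l hl01 hconv ηw hη T Λ hΛne hΛshrink barf y hbarfA barL hbarL w hw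
    fhat hfhat hatL hhatL
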